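/- arXiv:1212.5743 — 4 statements merged into one kernel-verified Lean document; each statement's English description precedes it below -/
import Mathlib

section
/- Let G be a topological group and K a compact subgroup. The quotient space G/K (of left cosets, with the quotient topology) is metrizable if and only if K has a countable base of neighborhoods in G. -/
/-!
For open `V ⊇ K` let `E V = {(xK, yK) | x⁻¹ y ∈ V}`. Compactness of `K` (through the tube lemma)
yields for every such `V` an open `W ⊇ K` with `W K W ⊆ V`, which makes `E W ○ E W ⊆ E V`; so
the `E V` form a uniformity on `G/K`, and it induces the quotient topology. A countable
neighbourhood base of `K` makes this uniformity countably generated, and `G/K` is T₁ because `K`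
is closed, hence `G/K` is metrizable. Conversely, since `K` is compact the projection `G → G/K`
is closed, so the neighbourhoods of its fibre `K` are the preimages of the neighbourhoods of the
point `K`, and a countable base at that point pulls back.
-/

open Filter Set Topology Pointwise
open scoped SetRel

theorem nhdsSet_isCountablyGenerated_iff {X : Type*} [TopologicalSpace X] {s : Set X} :
    (𝓝ˢ s).IsCountablyGenerated ↔
      ∃ B : ℕ → Set X, (∀ n, IsOpen (B n) ∧ s ⊆ B n) ∧
        ∀ U : Set X, IsOpen U → s ⊆ U → ∃ n, B n ⊆ U := by
  constructor
  · intro _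
    obtain ⟨B, hB, hbasis⟩ := (hasBasis_nhdsSet s).exists_antitone_subbasis
    exact ⟨B, hB, fun U hU hsU => hbasis.mem_iff.1 (hU.mem_nhdsSet.2 hsU)⟩
  · rintro ⟨B, hB, hsub⟩
    have hbasis : (𝓝ˢ s).HasBasis (fun _ => True) B :=
      (hasBasis_nhdsSet s).to_hasBasis
        (fun U hU => (hsub U hU.1 hU.2).imp fun _ hn => ⟨trivial, hn⟩)
        fun n _ => ⟨B n, hB n, subset_rfl⟩
    exact hbasis.isCountablyGenerated

theorem IsCompact.exists_isOpen_superset_mul_subset {M : Type*} [Mul M] [TopologicalSpace M]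
    [ContinuousMul M] {K V : Set M} (hK : IsCompact K) (hV : IsOpen V) (hKV : K * K ⊆ V) :
    ∃ A B : Set M, IsOpen A ∧ IsOpen B ∧ K ⊆ A ∧ K ⊆ B ∧ A * B ⊆ V := by
  obtain ⟨A, B, hA, hB, hKA, hKB, hAB⟩ :=
    generalized_tube_lemma hK hK (hV.preimage continuous_mul)
      fun p hp => hKV (mul_mem_mul hp.1 hp.2)
  exact ⟨A, B, hA, hB, hKA, hKB, mul_subset_iff.2 fun a ha b hb => hAB (mk_mem_prod ha hb)⟩

namespace Subgroup

variable {G : Type*} [Group G] (K : Subgroup G)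

def cosetEntourage (V : Set G) : Set ((G ⧸ K) × (G ⧸ K)) :=
  {p | ∃ x y : G, (x : G ⧸ K) = p.1 ∧ (y : G ⧸ K) = p.2 ∧ x⁻¹ * y ∈ V}

theorem cosetEntourage_mono : Monotone (cosetEntourage K) :=
  fun _ _ hVW _ ⟨x, y, hx, hy, hxy⟩ => ⟨x, y, hx, hy, hVW hxy⟩

variable [TopologicalSpace G]

theorem exists_isOpen_mul_mul_subset [ContinuousMul G] (hK : IsCompact (K : Set G))
    {V : Set G} (hV : IsOpen V) (hKV : (K : Set G) ⊆ V) :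
    ∃ W : Set G, IsOpen W ∧ (K : Set G) ⊆ W ∧ W * K * W ⊆ V := by
  obtain ⟨A, B, hA, hB, hKA, hKB, hAB⟩ :=
    hK.exists_isOpen_superset_mul_subset hV (by rwa [coe_mul_coe])
  obtain ⟨C, D, -, hD, hKC, hKD, hCD⟩ :=
    hK.exists_isOpen_superset_mul_subset hB (by rwa [coe_mul_coe])
  refine ⟨A ∩ D, hA.inter hD, subset_inter hKA hKD, ?_⟩
  calc A ∩ D * K * (A ∩ D) ⊆ A * C * D :=
        mul_subset_mul (mul_subset_mul inter_subset_left hKC) inter_subset_right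
    _ = A * (C * D) := mul_assoc _ _ _
    _ ⊆ A * B := mul_subset_mul_left hCD
    _ ⊆ V := hAB

def cosetUniformity : Filter ((G ⧸ K) × (G ⧸ K)) :=
  (𝓝ˢ (K : Set G)).lift' (cosetEntourage K)

theorem hasBasis_cosetUniformity :
    (cosetUniformity K).HasBasis (fun V => IsOpen V ∧ (K : Set G) ⊆ V) (cosetEntourage K) :=
  (hasBasis_nhdsSet _).lift' (cosetEntourage_mono K)

theorem isCountablyGenerated_cosetUniformity [(𝓝ˢ (K : Set G)).IsCountablyGenerated] :
    (cosetUniformity K).IsCountablyGenerated := by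
  obtain ⟨B, hB⟩ := (𝓝ˢ (K : Set G)).exists_antitone_basis
  exact (hB.toHasBasis.lift' (cosetEntourage_mono K)).isCountablyGenerated

theorem tendsto_swap_cosetUniformity [ContinuousInv G] :
    Tendsto Prod.swap (cosetUniformity K) (cosetUniformity K) := by
  refine (hasBasis_cosetUniformity K).tendsto_iff (hasBasis_cosetUniformity K) |>.2 ?_
  rintro V ⟨hV, hKV⟩
  refine ⟨V ∩ V⁻¹, ⟨hV.inter hV.inv, subset_inter hKV fun k hk => hKV (inv_mem hk)⟩, ?_⟩
  rintro _ ⟨x, y, hx, hy, hxy⟩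
  exact ⟨y, x, hy, hx, by simpa using hxy.2⟩

theorem cosetUniformity_lift'_comp_le [ContinuousMul G] (hK : IsCompact (K : Set G)) :
    (cosetUniformity K).lift' (fun s => s ○ s) ≤ cosetUniformity K := by
  refine (hasBasis_cosetUniformity K).ge_iff.2 ?_
  rintro V ⟨hV, hKV⟩
  obtain ⟨W, hW, hKW, hWKW⟩ := K.exists_isOpen_mul_mul_subset hK hV hKV
  refine mem_of_superset (mem_lift' ((hasBasis_cosetUniformity K).mem_of_mem ⟨hW, hKW⟩)) ?_
  rintro ⟨p, r⟩ ⟨q, ⟨x, y, hx, hy, hxy⟩, y', z, hy', hz, hyz⟩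
  have hyy' : y⁻¹ * y' ∈ K := QuotientGroup.eq.1 (hy.trans hy'.symm)
  refine ⟨x, z, hx, hz, ?_⟩
  simpa [mul_assoc] using hWKW (mul_mem_mul (mul_mem_mul hxy hyy') hyz)

theorem _root_.QuotientGroup.hasBasis_nhds_mk [SeparatelyContinuousMul G] (x : G) :
    (𝓝 (x : G ⧸ K)).HasBasis (fun V => IsOpen V ∧ (K : Set G) ⊆ V)
      (fun V => (↑) '' (x • V)) := by
  refine (nhds_basis_opens _).to_hasBasis (fun O hO => ?_) fun V hV => ?_
  · obtain ⟨hxO, hO⟩ := hO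
    refine ⟨x⁻¹ • ((↑) ⁻¹' O), ⟨(hO.preimage QuotientGroup.continuous_mk).smul _, ?_⟩, ?_⟩
    · intro k hk
      rw [mem_smul_set_iff_inv_smul_mem, inv_inv, smul_eq_mul, mem_preimage,
        QuotientGroup.mk_mul_of_mem x hk]
      exact hxO
    · rw [smul_inv_smul]; exact image_preimage_subset _ _
  · obtain ⟨hV, hKV⟩ := hV
    have hx : x ∈ x • V := by simpa using smul_mem_smul_set (a := x) (hKV K.one_mem)
    exact ⟨_, ⟨mem_image_of_mem _ hx, QuotientGroup.isOpenMap_coe _ (hV.smul x)⟩, subset_rfl⟩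

theorem nhds_eq_comap_cosetUniformity [ContinuousMul G] (hK : IsCompact (K : Set G)) (x : G) :
    𝓝 (x : G ⧸ K) = Filter.comap (Prod.mk (x : G ⧸ K)) (cosetUniformity K) := by
  refine (QuotientGroup.hasBasis_nhds_mk K x).ext ((hasBasis_cosetUniformity K).comap _)
    (fun V ⟨hV, hKV⟩ => ?_) fun V hV => ⟨V, hV, ?_⟩
  · obtain ⟨A, B, -, hB, hKA, hKB, hAB⟩ :=
      hK.exists_isOpen_superset_mul_subset hV (by rwa [coe_mul_coe])
    refine ⟨B, ⟨hB, hKB⟩, ?_⟩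
    rintro - ⟨x', y, hx', rfl, hxy⟩
    have hxx' : x⁻¹ * x' ∈ K := QuotientGroup.eq.1 hx'.symm
    refine ⟨y, mem_smul_set_iff_inv_smul_mem.2 ?_, rfl⟩
    simpa [mul_assoc] using hAB (mul_mem_mul (hKA hxx') hxy)
  · rintro - ⟨_, ⟨v, hv, rfl⟩, rfl⟩
    exact ⟨x, x * v, rfl, rfl, by simpa using hv⟩

abbrev cosetUniformSpace [IsTopologicalGroup G] (hK : IsCompact (K : Set G)) :
    UniformSpace (G ⧸ K) where
  toTopologicalSpace := inferInstance
  uniformity := cosetUniformity K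
  symm := tendsto_swap_cosetUniformity K
  comp := cosetUniformity_lift'_comp_le K hK
  nhds_eq_comap_uniformity := QuotientGroup.forall_mk.2 (nhds_eq_comap_cosetUniformity K hK)

theorem isCountablyGenerated_nhdsSet_of_isCompact [IsTopologicalGroup G]
    [FirstCountableTopology (G ⧸ K)] (hK : IsCompact (K : Set G)) :
    (𝓝ˢ (K : Set G)).IsCountablyGenerated := by
  rw [← QuotientGroup.preimage_mk_one,
    ← (QuotientGroup.isClosedMap_coe hK).comap_nhds_eq QuotientGroup.continuous_mk]
  infer_instance

end Subgroup

/-- For a compact subgroup `K` of a Hausdorff topological group `G`, the left coset space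
`G/K` is metrizable iff `K` has a countable base of neighborhoods in `G`. -/
theorem quotient_metrizable_iff_countable_nbhd_base {G : Type*} [Group G]
    [TopologicalSpace G] [IsTopologicalGroup G] [T2Space G] (K : Subgroup G)
    (hK : IsCompact (K : Set G)) :
    TopologicalSpace.MetrizableSpace (G ⧸ K) ↔
      ∃ B : ℕ → Set G, (∀ n, IsOpen (B n) ∧ (K : Set G) ⊆ B n) ∧
        ∀ U : Set G, IsOpen U → (K : Set G) ⊆ U → ∃ n, B n ⊆ U := by
  rw [← nhdsSet_isCountablyGenerated_iff]
  constructor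
  · intro _
    exact K.isCountablyGenerated_nhdsSet_of_isCompact hK
  · intro _
    have : IsClosed (K : Set G) := hK.isClosed
    exact @UniformSpace.metrizableSpace _ (K.cosetUniformSpace hK)
      K.isCountablyGenerated_cosetUniformity (inferInstanceAs (T0Space (G ⧸ K)))
end

section
/- Let G be an ω-narrow topological group acting transitively and continuously by isometries on a metric space X. Then X is separable. -/
/-!
For `ε > 0` the elements moving a base point `x₀` by less than `ε` form a neighbourhood `U` of
the identity, so countably many translates `a • U` cover `G`. Each `a` is an isometry, hence every
point `(a * u) • x₀` of the orbit lies within `ε` of `a • x₀`: the countably many points `a • x₀`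
form an `ε`-net of the orbit, which is all of `X`.
-/

open Pointwise Set

section

variable {G X : Type*} [Monoid G] [MulAction G X] [PseudoMetricSpace X]

theorem setOf_dist_smul_lt_mem_nhds_one [TopologicalSpace G] {x₀ : X}
    (h : Continuous fun g : G => g • x₀) {ε : ℝ} (hε : 0 < ε) :
    {g : G | dist (g • x₀) x₀ < ε} ∈ nhds (1 : G) :=
  h.continuousAt.preimage_mem_nhds <| by
    rw [one_smul]; exact Metric.ball_mem_nhds x₀ hε

theorem exists_dist_smul_lt_of_mul_eq_univ (hiso : ∀ g : G, Isometry (fun x : X => g • x))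
    {A U : Set G} (hAU : A * U = univ) {x₀ : X} {ε : ℝ}
    (hU : ∀ u ∈ U, dist (u • x₀) x₀ < ε) (g : G) :
    ∃ a ∈ A, dist (g • x₀) (a • x₀) < ε := by
  obtain ⟨a, ha, u, hu, rfl⟩ : g ∈ A * U := hAU ▸ mem_univ g
  refine ⟨a, ha, ?_⟩
  calc dist ((a * u) • x₀) (a • x₀) = dist (u • x₀) x₀ := by
        rw [mul_smul]; exact (hiso a).dist_eq _ _
    _ < ε := hU u hu

end

theorem separable_of_omegaNarrow_transitive_isometric_action_general {G X : Type*} [Group G]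
    [TopologicalSpace G] [MetricSpace X] [MulAction G X]
    (hnarrow : ∀ U ∈ nhds (1 : G), ∃ A : Set G, A.Countable ∧ A * U = Set.univ)
    (hiso : ∀ g : G, Isometry (fun x : X => g • x))
    (hcont : Continuous (fun p : G × X => p.1 • p.2))
    (htrans : ∀ x y : X, ∃ g : G, g • x = y) :
    TopologicalSpace.SeparableSpace X := by
  rcases isEmpty_or_nonempty X with hX | ⟨⟨x₀⟩⟩
  · infer_instance
  have horbit : Continuous fun g : G => g • x₀ :=
    hcont.comp (continuous_id.prodMk continuous_const)
  suffices SecondCountableTopology X from inferInstance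
  refine Metric.secondCountable_of_almost_dense_set fun ε hε => ?_
  obtain ⟨A, hA, hAU⟩ := hnarrow _ (setOf_dist_smul_lt_mem_nhds_one horbit hε)
  refine ⟨(· • x₀) '' A, hA.image _, fun y => ?_⟩
  obtain ⟨g, rfl⟩ := htrans x₀ y
  obtain ⟨a, ha, hlt⟩ := exists_dist_smul_lt_of_mul_eq_univ hiso hAU (fun _ hu => hu) g
  exact ⟨a • x₀, mem_image_of_mem _ ha, hlt.le⟩

/-- If an ω-narrow topological group acts transitively and continuously by isometries on a
metric space `X`, then `X` is separable. -/
theorem separable_of_omegaNarrow_transitive_isometric_action {G X : Type*} [Group G]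
    [TopologicalSpace G] [IsTopologicalGroup G] [MetricSpace X] [MulAction G X]
    (hnarrow : ∀ U ∈ nhds (1 : G), ∃ A : Set G, A.Countable ∧ A * U = Set.univ)
    (hiso : ∀ g : G, Isometry (fun x : X => g • x))
    (hcont : Continuous (fun p : G × X => p.1 • p.2))
    (htrans : ∀ x y : X, ∃ g : G, g • x = y) :
    TopologicalSpace.SeparableSpace X :=
  separable_of_omegaNarrow_transitive_isometric_action_general hnarrow hiso hcont htrans
end

section
/- Let G be an ω-narrow almost metrizable Hausdorff topological group. Then for every neighborhood O of the identity there exists a compact normal subgroup K ⊆ O of G such that the quotient group G/K is metrizable. -/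
/-!
Pick a compact subgroup `L ⊆ O` with `G ⧸ L` metrizable and a chain of closed symmetric identity
neighbourhoods `V₀ ⊇ V₁ ⊇ ⋯` with `V_{n+1}² ⊆ V_n` and `V₀ ⊆ O`, which maps into a countable base
of `G ⧸ L` at the coset `L`. By ω-narrowness there is a sequence `(a_i)` with `{a_i} V_n = G` for
every `n`; this makes the normal core `K` of `⋂ V_n` equal to the intersection of the closed
identity neighbourhoods `C_n = ⋂_{i ≤ n} a_i V_n a_i⁻¹`. As `K ⊆ L` and `G → G ⧸ L` is proper,
every open set containing `K` contains some `C_n`, so `G ⧸ K` is first countable, hence metrizable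
by Birkhoff–Kakutani.
-/

open Filter Pointwise Set Topology

theorem IsProperMap.mem_of_forall_clusterPt {X Y : Type*} [TopologicalSpace X]
    [TopologicalSpace Y] {f : X → Y} (hf : IsProperMap f) {F : Filter X} {y : Y}
    (hF : Tendsto f F (𝓝 y)) {T : Set X} (hT : IsOpen T) (hFT : ∀ x, ClusterPt x F → x ∈ T) :
    T ∈ F := by
  rw [mem_iff_inf_principal_compl]
  by_contra hne
  have : (F ⊓ 𝓟 Tᶜ).NeBot := ⟨hne⟩
  obtain ⟨x, -, hx⟩ := hf.clusterPt_of_mapClusterPt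
    (hF.mono_left (inf_le_left : F ⊓ 𝓟 Tᶜ ≤ F)).mapClusterPt
  have hxT : x ∈ T := hFT x (hx.mono inf_le_left)
  have hxTc : x ∈ Tᶜ := hT.isClosed_compl.closure_eq ▸
    mem_closure_iff_clusterPt.2 (hx.mono inf_le_right)
  exact hxTc hxT

theorem IsProperMap.exists_subset_of_iInter_subset {X Y : Type*} [TopologicalSpace X]
    [TopologicalSpace Y] {f : X → Y} (hf : IsProperMap f) {C : ℕ → Set X} (hC : Antitone C)
    (hCc : ∀ n, IsClosed (C n)) {y : Y} (hy : Tendsto f (⨅ n, 𝓟 (C n)) (𝓝 y))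
    {T : Set X} (hT : IsOpen T) (hCT : ⋂ n, C n ⊆ T) : ∃ n, C n ⊆ T := by
  have hTC : T ∈ ⨅ n, 𝓟 (C n) := hf.mem_of_forall_clusterPt hy hT fun x hx => hCT <|
    mem_iInter.2 fun n => (hCc n).closure_subset <|
      mem_closure_iff_clusterPt.2 (hx.mono (iInf_le _ n))
  simpa using (hasBasis_iInf_principal hC.directed_ge).mem_iff.1 hTC

namespace QuotientGroup

variable {G : Type*} [Group G] [TopologicalSpace G] [IsTopologicalGroup G]

theorem isProperMap_coe {L : Subgroup G} (hL : IsCompact (L : Set G)) :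
    IsProperMap ((↑) : G → G ⧸ L) := by
  rw [isProperMap_iff_isClosedMap_and_compact_fibers]
  refine ⟨continuous_mk, isClosedMap_coe hL, fun y => ?_⟩
  obtain ⟨g, rfl⟩ := mk_surjective y
  rw [← image_singleton, preimage_image_mk_eq_mul]
  exact isCompact_singleton.mul hL

theorem isCountablyGenerated_nhds_one {N : Subgroup G} [N.Normal] {C : ℕ → Set G}
    (hC : ∀ n, C n ∈ 𝓝 1) (hCN : ∀ T, IsOpen T → (N : Set G) ⊆ T → ∃ n, C n ⊆ T) :
    (𝓝 (1 : G ⧸ N)).IsCountablyGenerated := by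
  refine HasBasis.isCountablyGenerated (p := fun _ : ℕ => True)
    (s := fun n => ((↑) : G → G ⧸ N) '' C n) ⟨fun t => ⟨fun ht => ?_, ?_⟩⟩
  · have hNt : (N : Set G) ⊆ ((↑) : G → G ⧸ N) ⁻¹' interior t := fun k hk => by
      rw [mem_preimage, (eq_one_iff k).2 hk]
      exact mem_interior_iff_mem_nhds.2 ht
    obtain ⟨n, hn⟩ := hCN _ (isOpen_interior.preimage continuous_mk) hNt
    exact ⟨n, trivial, (image_subset_iff.2 hn).trans interior_subset⟩
  · rintro ⟨n, -, hn⟩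
    exact mem_of_superset (isOpenMap_coe.image_mem_nhds (hC n)) hn

end QuotientGroup

theorem IsTopologicalGroup.metrizableSpace {G : Type*} [Group G] [TopologicalSpace G]
    [IsTopologicalGroup G] [T0Space G] [(𝓝 (1 : G)).IsCountablyGenerated] :
    TopologicalSpace.MetrizableSpace G := by
  let := IsTopologicalGroup.rightUniformSpace G
  have : (uniformity G).IsCountablyGenerated := by
    rw [uniformity_eq_comap_nhds_one']
    exact comap.isCountablyGenerated _ _
  exact UniformSpace.metrizableSpace

structure NhdsOneChain (G : Type*) [Group G] [TopologicalSpace G] where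
  toFun : ℕ → Set G
  mem_nhds : ∀ n, toFun n ∈ 𝓝 1
  isClosed : ∀ n, IsClosed (toFun n)
  inv_mem : ∀ {n x}, x ∈ toFun n → x⁻¹ ∈ toFun n
  mul_subset : ∀ n, toFun (n + 1) * toFun (n + 1) ⊆ toFun n

namespace NhdsOneChain

variable {G : Type*} [Group G] [TopologicalSpace G]

instance : CoeFun (NhdsOneChain G) (fun _ => ℕ → Set G) := ⟨toFun⟩

variable (V : NhdsOneChain G)

theorem one_mem (n : ℕ) : (1 : G) ∈ V n := mem_of_mem_nhds (V.mem_nhds n)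

theorem antitone : Antitone V := antitone_nat_of_succ_le fun n x hx =>
  V.mul_subset n (by simpa using mul_mem_mul hx (V.one_mem (n + 1)))

theorem mul_mul_mem {n : ℕ} {x y z : G} (hx : x ∈ V (n + 2)) (hy : y ∈ V (n + 2))
    (hz : z ∈ V (n + 2)) : x * y * z ∈ V n :=
  V.mul_subset n <|
    mul_mem_mul (V.mul_subset (n + 1) (mul_mem_mul hx hy)) (V.antitone (n + 1).le_succ hz)

def subgroup : Subgroup G where
  carrier := ⋂ n, V n
  one_mem' := mem_iInter.2 V.one_mem
  mul_mem' hx hy := mem_iInter.2 fun n =>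
    V.mul_subset n (mul_mem_mul (mem_iInter.1 hx (n + 1)) (mem_iInter.1 hy (n + 1)))
  inv_mem' hx := mem_iInter.2 fun n => V.inv_mem (mem_iInter.1 hx n)

@[simp]
theorem mem_subgroup {x : G} : x ∈ V.subgroup ↔ ∀ n, x ∈ V n := mem_iInter

theorem subgroup_le {L : Subgroup G} [T1Space (G ⧸ L)]
    (hL : Tendsto ((↑) : G → G ⧸ L) (⨅ n, 𝓟 (V n)) (𝓝 ((1 : G) : G ⧸ L))) : V.subgroup ≤ L := by
  intro x hx
  have hpure : pure x ≤ ⨅ n, 𝓟 (V n) :=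
    le_iInf fun n => (pure_le_principal x).2 (V.mem_subgroup.1 hx n)
  have hxL : ((x : G) : G ⧸ L) = ((1 : G) : G ⧸ L) :=
    pure_le_nhds_iff.1 ((hL.mono_left hpure).trans_eq' (Filter.map_pure _ _).symm)
  simpa using (QuotientGroup.eq.1 hxL.symm)

theorem exists_forall_subset [IsTopologicalGroup G] {N : ℕ → Set G} (hN : ∀ n, N n ∈ 𝓝 1) :
    ∃ V : NhdsOneChain G, ∀ n, V n ⊆ N n := by
  choose W hW using fun U : {U : Set G // U ∈ 𝓝 1} =>
    exists_closed_nhds_one_inv_eq_mul_subset U.2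
  have hWU (U) : W U ⊆ U := fun x hx =>
    (hW U).2.2.2 (by simpa using mul_mem_mul hx (mem_of_mem_nhds (hW U).1))
  have hWinv (U) {x : G} (hx : x ∈ W U) : x⁻¹ ∈ W U := by
    rwa [← Set.mem_inv, (hW U).2.2.1]
  let U : ℕ → {U : Set G // U ∈ 𝓝 1} := fun n => Nat.rec ⟨W ⟨N 0, hN 0⟩, (hW _).1⟩
    (fun n U => ⟨W ⟨U ∩ N (n + 1), inter_mem U.2 (hN (n + 1))⟩, (hW _).1⟩) n
  refine ⟨⟨fun n => (U n).1, fun n => (U n).2, ?_, ?_, fun n => ?_⟩, ?_⟩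
  · rintro (_ | n) <;> exact (hW _).2.1
  · rintro (_ | n) x hx <;> exact hWinv _ hx
  · exact (hW _).2.2.2.trans inter_subset_left
  · rintro (_ | n)
    · exact hWU _
    · exact (hWU _).trans inter_subset_right

variable (a : ℕ → G)

def conjInter (n : ℕ) : Set G := {x | ∀ i ≤ n, (a i)⁻¹ * x * a i ∈ V n}

theorem conjInter_mem_nhds [ContinuousMul G] (n : ℕ) : V.conjInter a n ∈ 𝓝 1 := by
  refine (eventually_all_finite (finite_Iic n)).2 fun i _ => ?_
  have hconj : Tendsto (fun x => (a i)⁻¹ * x * a i) (𝓝 1) (𝓝 1) :=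
    ((continuous_mul_const (a i)).comp (continuous_const_mul (a i)⁻¹)).tendsto' 1 1 (by simp)
  exact hconj (V.mem_nhds n)

theorem isClosed_conjInter [ContinuousMul G] (n : ℕ) : IsClosed (V.conjInter a n) := by
  simp only [conjInter, ofPred_forall]
  exact isClosed_iInter fun i => isClosed_iInter fun _ => (V.isClosed n).preimage (by fun_prop)

theorem conjInter_antitone : Antitone (V.conjInter a) :=
  fun _ _ hmn _ hx i hi => V.antitone hmn (hx i (hi.trans hmn))

variable {a}

theorem exists_forall_conjInter_conj_mem (ha : ∀ n, range a * V n = univ) (g : G) (n : ℕ) :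
    ∃ m, ∀ x ∈ V.conjInter a m, g⁻¹ * x * g ∈ V n := by
  obtain ⟨_, ⟨i, rfl⟩, v, hv, rfl⟩ : g ∈ range a * V (n + 2) := ha (n + 2) ▸ mem_univ g
  refine ⟨max (n + 2) i, fun x hx => ?_⟩
  have hxi : (a i)⁻¹ * x * a i ∈ V (n + 2) :=
    V.antitone (le_max_left _ _) (hx i (le_max_right _ _))
  simpa only [mul_inv_rev, mul_assoc] using V.mul_mul_mem (V.inv_mem hv) hxi hv

theorem iInf_principal_conjInter_le (ha : ∀ n, range a * V n = univ) :
    ⨅ n, 𝓟 (V.conjInter a n) ≤ ⨅ n, 𝓟 (V n) :=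
  le_iInf fun n => by
    obtain ⟨m, hm⟩ := V.exists_forall_conjInter_conj_mem ha 1 n
    exact iInf_le_of_le m (principal_mono.2 fun x hx => by simpa using hm x hx)

theorem iInter_conjInter_eq (ha : ∀ n, range a * V n = univ) :
    ⋂ n, V.conjInter a n = V.subgroup.normalCore := by
  ext x
  refine ⟨fun hx b => V.mem_subgroup.2 fun n => ?_, fun hx => mem_iInter.2 fun n i _ => ?_⟩
  · obtain ⟨m, hm⟩ := V.exists_forall_conjInter_conj_mem ha b⁻¹ n
    simpa using hm x (mem_iInter.1 hx m)
  · simpa using V.mem_subgroup.1 (hx (a i)⁻¹) n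

end NhdsOneChain

theorem exists_seq_range_mul_eq_univ {G : Type*} [Group G] {S : ℕ → Set G}
    (h : ∀ n, ∃ A : Set G, A.Countable ∧ A * S n = univ) :
    ∃ a : ℕ → G, ∀ n, range a * S n = univ := by
  choose A hA hAS using h
  obtain ⟨a, ha⟩ := (countable_iUnion hA).exists_eq_range
    ((hAS 0 ▸ univ_nonempty : (A 0 * S 0).Nonempty).of_mul_left.mono (subset_iUnion A 0))
  exact ⟨a, fun n =>
    eq_univ_of_univ_subset (hAS n ▸ mul_subset_mul_right (ha ▸ subset_iUnion A n))⟩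

theorem exists_compact_normal_subgroup_metrizable_quotient_general {G : Type*} [Group G]
    [TopologicalSpace G] [IsTopologicalGroup G]
    (hnarrow : ∀ U ∈ nhds (1 : G), ∃ A : Set G, A.Countable ∧ A * U = Set.univ)
    (halm : ∀ O ∈ nhds (1 : G), ∃ L : Subgroup G, (L : Set G) ⊆ O ∧
      IsCompact (L : Set G) ∧ TopologicalSpace.MetrizableSpace (G ⧸ L)) :
    ∀ O ∈ nhds (1 : G), ∃ K : Subgroup G, (K : Set G) ⊆ O ∧ IsCompact (K : Set G) ∧
      K.Normal ∧ TopologicalSpace.MetrizableSpace (G ⧸ K) := by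
  intro O hO
  obtain ⟨L, -, hL, hLmet⟩ := halm O hO
  obtain ⟨B, hB⟩ := (𝓝 ((1 : G) : G ⧸ L)).exists_antitone_basis
  obtain ⟨V, hV⟩ := NhdsOneChain.exists_forall_subset fun n =>
    inter_mem hO (QuotientGroup.continuous_mk.continuousAt.preimage_mem_nhds (hB.mem n))
  obtain ⟨a, ha⟩ := exists_seq_range_mul_eq_univ fun n => hnarrow (V n) (V.mem_nhds n)
  have hVL : Tendsto ((↑) : G → G ⧸ L) (⨅ n, 𝓟 (V n)) (𝓝 ((1 : G) : G ⧸ L)) :=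
    hB.toHasBasis.tendsto_right_iff.2 fun n _ =>
      mem_iInf_of_mem n (mem_principal.2 ((hV n).trans inter_subset_right))
  set K := V.subgroup.normalCore
  have hKC : ⋂ n, V.conjInter a n = K := V.iInter_conjInter_eq ha
  have hKc : IsClosed (K : Set G) := hKC ▸ isClosed_iInter (V.isClosed_conjInter a)
  have hKL : K ≤ L := V.subgroup.normalCore_le.trans (V.subgroup_le hVL)
  have : (𝓝 (1 : G ⧸ K)).IsCountablyGenerated :=
    QuotientGroup.isCountablyGenerated_nhds_one (V.conjInter_mem_nhds a) fun T hT hKT =>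
      (QuotientGroup.isProperMap_coe hL).exists_subset_of_iInter_subset (V.conjInter_antitone a)
        (V.isClosed_conjInter a) (hVL.mono_left (V.iInf_principal_conjInter_le ha)) hT
        (hKC.symm ▸ hKT)
  exact ⟨K, fun x hx => (hV 0 (V.mem_subgroup.1 (V.subgroup.normalCore_le hx) 0)).1,
    hL.of_isClosed_subset hKc hKL, inferInstance, IsTopologicalGroup.metrizableSpace⟩

/-- In an ω-narrow almost metrizable Hausdorff topological group, every neighborhood of the
identity contains a compact *normal* subgroup with metrizable quotient. (The almost
metrizability is used in the form of Pasynkov's theorem: every identity neighborhood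
contains a compact subgroup with metrizable quotient.) -/
theorem exists_compact_normal_subgroup_metrizable_quotient {G : Type*} [Group G]
    [TopologicalSpace G] [IsTopologicalGroup G] [T2Space G]
    (hnarrow : ∀ U ∈ nhds (1 : G), ∃ A : Set G, A.Countable ∧ A * U = Set.univ)
    (halm : ∀ O ∈ nhds (1 : G), ∃ L : Subgroup G, (L : Set G) ⊆ O ∧
      IsCompact (L : Set G) ∧ TopologicalSpace.MetrizableSpace (G ⧸ L)) :
    ∀ O ∈ nhds (1 : G), ∃ K : Subgroup G, (K : Set G) ⊆ O ∧ IsCompact (K : Set G) ∧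
      K.Normal ∧ TopologicalSpace.MetrizableSpace (G ⧸ K) :=
  exists_compact_normal_subgroup_metrizable_quotient_general hnarrow halm
end

section
/- Let G be a topological group and L a compact subgroup with a countable neighborhood base (U_n) in G satisfying U_n = U_n⁻¹ = U_n L and U_{n+1}² ⊆ U_n. Then there exists a metric d on the coset space G/L compatible with the quotient topology which is invariant under the left translation action of G. -/
/-!
Call `a, b ∈ G ⧸ L` `n`-close if `a = xL`, `b = yL` with `x⁻¹ * y ∈ U n`. Because the `U n` are
symmetric and `L`-bi-invariant, these relations are reflexive, symmetric, invariant under `G`, and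
the square of the `(n + 1)`-st lies in the `n`-th; since `U n` is a neighbourhood base of `L` in a
`T₁` group, the `n`-neighbourhoods of a coset form a base of the quotient topology and the
relations separate points. Kelley's metrization argument then applies: the largest pseudometric
below `ρ(a, b) = 2⁻ⁿ`, `n` least with `a, b` not `2n`-close, is at least `ρ / 2`, and since it
is an infimum over chains it inherits every symmetry of the relations.
-/

open Pointwise Topology NNReal

namespace PseudoMetricSpace

variable {X Y : Type*}

theorem dist_ofPreNNDist_map {d : X → X → ℝ≥0} (hd_self : ∀ x, d x x = 0)
    (hd_comm : ∀ x y, d x y = d y x) {e : Y → Y → ℝ≥0} (he_self : ∀ x, e x x = 0)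
    (he_comm : ∀ x y, e x y = e y x) {f : X → Y} (hf : Function.Surjective f)
    (hfd : ∀ x y, e (f x) (f y) = d x y) (x y : X) :
    (ofPreNNDist e he_self he_comm).dist (f x) (f y) =
      (ofPreNNDist d hd_self hd_comm).dist x y := by
  rw [dist_ofPreNNDist, dist_ofPreNNDist, ← (List.map_surjective_iff.2 hf).iInf_comp]
  congr 2 with l
  rw [← List.map_cons, show List.map f l ++ [f y] = List.map f (l ++ [y]) by simp,
    List.zipWith_map]
  simp only [hfd]

end PseudoMetricSpace

section NormalSeq

variable {X Y : Type*}

structure IsNormalSeq (R : ℕ → X → X → Prop) : Prop where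
  refl : ∀ n x, R n x x
  symm : ∀ n x y, R n x y → R n y x
  trans : ∀ n x y z, R (n + 1) x y → R (n + 1) y z → R n x z

open Classical in
/-- Indexing by `2 * n` turns `R (n + 1) ∘ R (n + 1) ⊆ R n` into the threefold composition
needed by `PseudoMetricSpace.le_two_mul_dist_ofPreNNDist`. -/
noncomputable def levelPreDist (R : ℕ → X → X → Prop) (x y : X) : ℝ≥0 :=
  if h : ∃ n, ¬R (2 * n) x y then (1 / 2) ^ Nat.find h else 0

theorem levelPreDist_le {R : ℕ → X → X → Prop} {x y : X} {c : ℝ≥0}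
    (h : ∀ n, ¬R (2 * n) x y → (1 / 2) ^ n ≤ c) : levelPreDist R x y ≤ c := by
  classical
  unfold levelPreDist
  split_ifs with hex
  · exact h _ (Nat.find_spec hex)
  · exact zero_le

namespace IsNormalSeq

variable {R : ℕ → X → X → Prop}

theorem antitone (hR : IsNormalSeq R) (x y : X) : Antitone fun n => R n x y :=
  antitone_nat_of_succ_le fun n h => hR.trans n x y y h (hR.refl _ y)

theorem pow_le_levelPreDist_iff (hR : IsNormalSeq R) {n : ℕ} {x y : X} :
    (1 / 2 : ℝ≥0) ^ n ≤ levelPreDist R x y ↔ ¬R (2 * n) x y := by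
  classical
  unfold levelPreDist
  split_ifs with h
  · rw [pow_le_pow_iff_right_of_lt_one₀ (by norm_num) (by norm_num), Nat.find_le_iff]
    exact ⟨fun ⟨m, hmn, hm⟩ hn => hm (hR.antitone x y (by omega) hn), fun hn => ⟨n, le_rfl, hn⟩⟩
  · push Not at h
    simp [h n]

theorem levelPreDist_self (hR : IsNormalSeq R) (x : X) : levelPreDist R x x = 0 :=
  dif_neg (by simp [hR.refl])

theorem levelPreDist_comm (hR : IsNormalSeq R) (x y : X) :
    levelPreDist R x y = levelPreDist R y x := by
  have key : ∀ x y, levelPreDist R x y ≤ levelPreDist R y x := fun x y =>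
    levelPreDist_le fun _ hn => hR.pow_le_levelPreDist_iff.2 (mt (hR.symm _ y x) hn)
  exact (key x y).antisymm (key y x)

theorem levelPreDist_le_two_mul_max (hR : IsNormalSeq R) (x₁ x₂ x₃ x₄ : X) :
    levelPreDist R x₁ x₄ ≤
      2 * max (levelPreDist R x₁ x₂) (max (levelPreDist R x₂ x₃) (levelPreDist R x₃ x₄)) := by
  refine levelPreDist_le fun n hn => ?_
  rw [show (1 / 2 : ℝ≥0) ^ n = 2 * (1 / 2) ^ (n + 1) by ring]
  gcongr
  simp only [le_max_iff, hR.pow_le_levelPreDist_iff]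
  by_contra! h
  obtain ⟨h₁₂, h₂₃, h₃₄⟩ := h
  exact hn (hR.trans _ _ _ _ (hR.trans _ _ _ _ h₁₂ h₂₃) (hR.antitone _ _ (by omega) h₃₄))

noncomputable abbrev pseudoMetricSpace (hR : IsNormalSeq R) : PseudoMetricSpace X :=
  .ofPreNNDist (levelPreDist R) hR.levelPreDist_self hR.levelPreDist_comm

theorem dist_le_levelPreDist (hR : IsNormalSeq R) (x y : X) :
    hR.pseudoMetricSpace.dist x y ≤ levelPreDist R x y :=
  PseudoMetricSpace.dist_ofPreNNDist_le _ _ _ x y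

theorem levelPreDist_le_two_mul_dist (hR : IsNormalSeq R) (x y : X) :
    levelPreDist R x y ≤ 2 * hR.pseudoMetricSpace.dist x y :=
  PseudoMetricSpace.le_two_mul_dist_ofPreNNDist _ _ _ hR.levelPreDist_le_two_mul_max x y

theorem dist_lt_of_rel (hR : IsNormalSeq R) {n : ℕ} {x y : X} (h : R (2 * n) x y) :
    hR.pseudoMetricSpace.dist x y < (1 / 2) ^ n := by
  have : levelPreDist R x y < (1 / 2) ^ n :=
    not_le.1 (mt hR.pow_le_levelPreDist_iff.1 (not_not.2 h))
  exact (hR.dist_le_levelPreDist x y).trans_lt (by exact_mod_cast this)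

theorem rel_of_dist_lt (hR : IsNormalSeq R) {n : ℕ} {x y : X}
    (h : hR.pseudoMetricSpace.dist x y < (1 / 2) ^ (n + 1)) : R n x y := by
  have : (levelPreDist R x y : ℝ) < (1 / 2) ^ n :=
    (hR.levelPreDist_le_two_mul_dist x y).trans_lt (by rw [pow_succ] at h; linarith)
  have : ¬(1 / 2 : ℝ≥0) ^ n ≤ levelPreDist R x y := fun h' => this.not_ge (by exact_mod_cast h')
  exact hR.antitone x y (by omega : n ≤ 2 * n) (not_not.1 (mt hR.pow_le_levelPreDist_iff.2 this))

theorem dist_eq_zero_iff (hR : IsNormalSeq R) {x y : X} :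
    hR.pseudoMetricSpace.dist x y = 0 ↔ ∀ n, R n x y := by
  refine ⟨fun h n => hR.rel_of_dist_lt (by rw [h]; positivity), fun h => ?_⟩
  refine le_antisymm (ge_of_tendsto' (tendsto_pow_atTop_nhds_zero_of_lt_one
    (by norm_num : (0 : ℝ) ≤ 1 / 2) (by norm_num)) fun n => (hR.dist_lt_of_rel (h _)).le)
    (@dist_nonneg _ hR.pseudoMetricSpace _ _)

theorem hasBasis_dist_lt (hR : IsNormalSeq R) {f : Filter X} {x : X}
    (hf : f.HasBasis (fun _ => True) fun n => {y | R n x y}) :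
    f.HasBasis (fun ε : ℝ => 0 < ε) fun ε => {y | hR.pseudoMetricSpace.dist x y < ε} := by
  refine hf.to_hasBasis (fun n _ => ⟨(1 / 2) ^ (n + 1), by positivity,
    fun y hy => hR.rel_of_dist_lt hy⟩) fun ε hε => ?_
  obtain ⟨n, hn⟩ := exists_pow_lt_of_lt_one hε (by norm_num : (1 / 2 : ℝ) < 1)
  exact ⟨2 * n, trivial, fun y hy => (hR.dist_lt_of_rel hy).trans hn⟩

theorem dist_map {S : ℕ → Y → Y → Prop} (hR : IsNormalSeq R) (hS : IsNormalSeq S) {f : X → Y}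
    (hf : Function.Surjective f) (hfR : ∀ n x y, S n (f x) (f y) ↔ R n x y) (x y : X) :
    hS.pseudoMetricSpace.dist (f x) (f y) = hR.pseudoMetricSpace.dist x y := by
  refine PseudoMetricSpace.dist_ofPreNNDist_map _ _ _ _ hf (fun x y => le_antisymm ?_ ?_) x y
  · exact levelPreDist_le fun n hn => hR.pow_le_levelPreDist_iff.2 ((hfR _ x y).not.1 hn)
  · exact levelPreDist_le fun n hn => hS.pow_le_levelPreDist_iff.2 ((hfR _ x y).not.2 hn)

end IsNormalSeq

end NormalSeq

section Coset

variable {G : Type*} [Group G] {L : Subgroup G}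

def cosetRel (L : Subgroup G) (V : Set G) (a b : G ⧸ L) : Prop :=
  ∃ x y : G, (x : G ⧸ L) = a ∧ (y : G ⧸ L) = b ∧ x⁻¹ * y ∈ V

theorem cosetRel_mk_mk {V : Set G} (hVinv : V⁻¹ ⊆ V) (hVL : V * L ⊆ V) {x y : G} :
    cosetRel L V x y ↔ x⁻¹ * y ∈ V := by
  refine ⟨fun ⟨x', y', hx, hy, h⟩ => ?_, fun h => ⟨x, y, rfl, rfl, h⟩⟩
  have hmul : ∀ z ∈ V, ∀ l ∈ L, z * l ∈ V := fun z hz l hl => hVL (Set.mul_mem_mul hz hl)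
  have hmul' : ∀ l ∈ L, ∀ z ∈ V, l * z ∈ V := fun l hl z hz => by
    simpa using hVinv (Set.inv_mem_inv.2 (hmul _ (hVinv (Set.inv_mem_inv.2 hz)) _ (L.inv_mem hl)))
  rw [show x⁻¹ * y = x⁻¹ * x' * (x'⁻¹ * y' * (y'⁻¹ * y)) by group]
  exact hmul' _ (QuotientGroup.eq.1 hx.symm) _ (hmul _ h _ (QuotientGroup.eq.1 hy))

theorem cosetRel_smul {V : Set G} (g : G) {a b : G ⧸ L} :
    cosetRel L V (g • a) (g • b) ↔ cosetRel L V a b := by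
  have key : ∀ (g : G) {a b : G ⧸ L}, cosetRel L V a b → cosetRel L V (g • a) (g • b) :=
    fun g _ _ ⟨x, y, hx, hy, h⟩ =>
      ⟨g * x, g * y, by rw [← hx]; rfl, by rw [← hy]; rfl, by simpa [mul_assoc] using h⟩
  exact ⟨fun h => by simpa using key g⁻¹ h, key g⟩

theorem isNormalSeq_cosetRel {U : ℕ → Set G} (hone : ∀ n, (1 : G) ∈ U n)
    (hinv : ∀ n, (U n)⁻¹ ⊆ U n) (hUL : ∀ n, U n * L ⊆ U n)
    (hsq : ∀ n, U (n + 1) * U (n + 1) ⊆ U n) : IsNormalSeq fun n => cosetRel L (U n) where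
  refl n a := by
    induction a using QuotientGroup.induction_on with
    | H x => exact ⟨x, x, rfl, rfl, by simpa using hone n⟩
  symm n a b := by
    rintro ⟨x, y, rfl, rfl, h⟩
    exact ⟨y, x, rfl, rfl, by simpa using hinv n (Set.inv_mem_inv.2 h)⟩
  trans n a b c := by
    rintro ⟨x, y, rfl, rfl, hxy⟩ hyz
    induction c using QuotientGroup.induction_on with
    | H z =>
      rw [cosetRel_mk_mk (hinv _) (hUL _)] at hyz
      exact ⟨x, z, rfl, rfl, by simpa [mul_assoc] using hsq n (Set.mul_mem_mul hxy hyz)⟩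

theorem eq_of_forall_cosetRel [TopologicalSpace G] [T1Space G] {U : ℕ → Set G}
    (hinv : ∀ n, (U n)⁻¹ ⊆ U n) (hUL : ∀ n, U n * L ⊆ U n)
    (hbase : ∀ V : Set G, IsOpen V → (L : Set G) ⊆ V → ∃ n, U n ⊆ V) {a b : G ⧸ L}
    (h : ∀ n, cosetRel L (U n) a b) : a = b := by
  induction a using QuotientGroup.induction_on with | H x => ?_
  induction b using QuotientGroup.induction_on with | H y => ?_
  refine QuotientGroup.eq.2 (by_contra fun hxy => ?_)
  obtain ⟨n, hn⟩ := hbase _ isOpen_compl_singleton (Set.subset_compl_singleton_iff.2 hxy)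
  exact hn ((cosetRel_mk_mk (hinv n) (hUL n)).1 (h n)) rfl

theorem hasBasis_nhds_cosetRel [TopologicalSpace G] [ContinuousMul G] {U : ℕ → Set G}
    (hopen : ∀ n, IsOpen (U n)) (hone : ∀ n, (1 : G) ∈ U n)
    (hinv : ∀ n, (U n)⁻¹ ⊆ U n) (hUL : ∀ n, U n * L ⊆ U n)
    (hbase : ∀ V : Set G, IsOpen V → (L : Set G) ⊆ V → ∃ n, U n ⊆ V) (a : G ⧸ L) :
    (𝓝 a).HasBasis (fun _ => True) fun n => {b | cosetRel L (U n) a b} := by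
  induction a using QuotientGroup.induction_on with | H x => ?_
  refine ⟨fun s => ⟨fun hs => ?_, fun ⟨n, _, hn⟩ => ?_⟩⟩
  · obtain ⟨t, hts, ht, hxt⟩ := mem_nhds_iff.1 hs
    have hW : IsOpen ((fun z => ((x * z : G) : G ⧸ L)) ⁻¹' t) := ht.preimage (by fun_prop)
    obtain ⟨n, hn⟩ := hbase _ hW fun l hl => by
      simpa [Set.mem_preimage, QuotientGroup.mk_mul_of_mem x hl] using hxt
    refine ⟨n, trivial, fun b hb => ?_⟩
    induction b using QuotientGroup.induction_on with | H y => ?_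
    simpa using hts (hn ((cosetRel_mk_mk (hinv _) (hUL _)).1 hb))
  · have hmem : (fun u => ((x * u : G) : G ⧸ L)) '' U n ∈ 𝓝 (x : G ⧸ L) := by
      simpa using (QuotientGroup.isOpenMap_coe.comp (isOpenMap_mul_left x)).image_mem_nhds
        ((hopen n).mem_nhds (hone n))
    refine Filter.mem_of_superset hmem (hn.trans' ?_)
    rintro _ ⟨u, hu, rfl⟩
    exact ⟨x, x * u, rfl, rfl, by simpa using hu⟩

end Coset

theorem exists_invariant_compatible_metric_general {G : Type*} [Group G] [TopologicalSpace G]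
    [IsTopologicalGroup G] [T2Space G] (L : Subgroup G)
    (U : ℕ → Set G)
    (hopen : ∀ n, IsOpen (U n) ∧ (L : Set G) ⊆ U n)
    (hbase : ∀ V : Set G, IsOpen V → (L : Set G) ⊆ V → ∃ n, U n ⊆ V)
    (hsymm : ∀ n, U n = (U n)⁻¹)
    (hUL : ∀ n, U n = U n * (L : Set G))
    (hsq : ∀ n, U (n + 1) * U (n + 1) ⊆ U n) :
    ∃ d : (G ⧸ L) → (G ⧸ L) → ℝ,
      (∀ a b, d a b = 0 ↔ a = b) ∧
      (∀ a b, d a b = d b a) ∧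
      (∀ a b c, d a c ≤ d a b + d b c) ∧
      (∀ a : G ⧸ L, ∀ s : Set (G ⧸ L),
        s ∈ nhds a ↔ ∃ ε > 0, {b | d a b < ε} ⊆ s) ∧
      (∀ g : G, ∀ a b : G ⧸ L, d (g • a) (g • b) = d a b) := by
  have hone : ∀ n, (1 : G) ∈ U n := fun n => (hopen n).2 L.one_mem
  have hinv : ∀ n, (U n)⁻¹ ⊆ U n := fun n => (hsymm n).ge
  have hUL' : ∀ n, U n * L ⊆ U n := fun n => (hUL n).ge
  have hR := isNormalSeq_cosetRel hone hinv hUL' hsq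
  refine ⟨hR.pseudoMetricSpace.dist, fun a b => ?_, hR.pseudoMetricSpace.dist_comm,
    hR.pseudoMetricSpace.dist_triangle, fun a s => ?_, fun g a b => ?_⟩
  · rw [hR.dist_eq_zero_iff]
    exact ⟨eq_of_forall_cosetRel hinv hUL' hbase, by rintro rfl n; exact hR.refl n a⟩
  · exact (hR.hasBasis_dist_lt
      (hasBasis_nhds_cosetRel (fun n => (hopen n).1) hone hinv hUL' hbase a)).mem_iff
  · exact hR.dist_map hR (MulAction.surjective g) (fun n _ _ => cosetRel_smul g) a b

/-- Given a compact subgroup `L` of a topological group `G` with a countable neighborhood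
base `(U n)` satisfying `U n = (U n)⁻¹ = U n * L` and `U (n+1) * U (n+1) ⊆ U n`, there is a
metric on `G ⧸ L` compatible with the quotient topology and invariant under the left
translation action of `G`. -/
theorem exists_invariant_compatible_metric {G : Type*} [Group G] [TopologicalSpace G]
    [IsTopologicalGroup G] [T2Space G] (L : Subgroup G) (hL : IsCompact (L : Set G))
    (U : ℕ → Set G)
    (hopen : ∀ n, IsOpen (U n) ∧ (L : Set G) ⊆ U n)
    (hbase : ∀ V : Set G, IsOpen V → (L : Set G) ⊆ V → ∃ n, U n ⊆ V)
    (hsymm : ∀ n, U n = (U n)⁻¹)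
    (hUL : ∀ n, U n = U n * (L : Set G))
    (hsq : ∀ n, U (n + 1) * U (n + 1) ⊆ U n) :
    ∃ d : (G ⧸ L) → (G ⧸ L) → ℝ,
      (∀ a b, d a b = 0 ↔ a = b) ∧
      (∀ a b, d a b = d b a) ∧
      (∀ a b c, d a c ≤ d a b + d b c) ∧
      (∀ a : G ⧸ L, ∀ s : Set (G ⧸ L),
        s ∈ nhds a ↔ ∃ ε > 0, {b | d a b < ε} ⊆ s) ∧
      (∀ g : G, ∀ a b : G ⧸ L, d (g • a) (g • b) = d a b) :=
  exists_invariant_compatible_metric_general L U hopen hbase hsymm hUL hsq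
end
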